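/- arXiv:1601.03095 — 3 statements merged into one kernel-verified Lean document; each statement's English description precedes it below -/
import Mathlib

section
/- Let f : 2^N → ℝ be a monotone submodular function and S, H ⊆ N disjoint from {a, b} with a, b ∉ H. Define the smooth marginal contribution F_S(x) = (1/2^{|H|}) · Σ_{H' ⊆ H} f_S(H' ∪ {x}), where f_S(T) = f(S ∪ T) − f(S). If F_S(a) ≥ F_S(b), then f_S(a) ≥ f_{S ∪ H}(b), where f_{S∪H}(b) = f(S ∪ H ∪ {b}) − f(S ∪ H). -/
theorem smooth_comparison_black_and_white {α : Type*} [DecidableEq α]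
    (f : Finset α → ℝ)
    (hmono : ∀ S T : Finset α, S ⊆ T → f S ≤ f T)
    (hsub : ∀ A B : Finset α, f (A ∪ B) + f (A ∩ B) ≤ f A + f B)
    (S H : Finset α) (a b : α)
    (haS : a ∉ S) (hbS : b ∉ S) (haH : a ∉ H) (hbH : b ∉ H)
    (hF : (1 / (2 : ℝ) ^ H.card) * ∑ H' ∈ H.powerset, (f (S ∪ (H' ∪ {a})) - f S) ≥
          (1 / (2 : ℝ) ^ H.card) * ∑ H' ∈ H.powerset, (f (S ∪ (H' ∪ {b})) - f S)) :
    f (insert a S) - f S ≥ f (insert b (S ∪ H)) - f (S ∪ H) := by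
  have hpos : (0:ℝ) < 1 / (2:ℝ) ^ H.card := by positivity
  have hsum : ∑ H' ∈ H.powerset, (f (S ∪ (H' ∪ {b})) - f S) ≤
      ∑ H' ∈ H.powerset, (f (S ∪ (H' ∪ {a})) - f S) :=
    (mul_le_mul_iff_right₀ hpos).mp hF
  have key1 : ∀ H' ∈ H.powerset,
      f (S ∪ (H' ∪ {a})) - f S ≤ (f (insert a S) - f S) + (f (S ∪ H') - f S) := by
    intro H' hH'
    have hH'sub : H' ⊆ H := Finset.mem_powerset.mp hH'
    have ha' : a ∉ H' := fun h => haH (hH'sub h)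
    have hsub' := hsub (insert a S) (S ∪ H')
    have hu : insert a S ∪ (S ∪ H') = S ∪ (H' ∪ {a}) := by
      ext x; simp only [Finset.mem_union, Finset.mem_insert, Finset.mem_singleton]; tauto
    have hi : insert a S ∩ (S ∪ H') = S := by
      ext x
      simp only [Finset.mem_inter, Finset.mem_insert, Finset.mem_union]
      constructor
      · rintro ⟨rfl | hx, hy | hy⟩ <;> first | assumption | (exfalso; tauto)
      · intro hx; exact ⟨Or.inr hx, Or.inl hx⟩
    rw [hu, hi] at hsub'
    linarith
  have key2 : ∀ H' ∈ H.powerset,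
      (f (insert b (S ∪ H)) - f (S ∪ H)) + (f (S ∪ H') - f S) ≤
        f (S ∪ (H' ∪ {b})) - f S := by
    intro H' hH'
    have hH'sub : H' ⊆ H := Finset.mem_powerset.mp hH'
    have hb' : b ∉ H' := fun h => hbH (hH'sub h)
    have hsub' := hsub (S ∪ (H' ∪ {b})) (S ∪ H)
    have hu : S ∪ (H' ∪ {b}) ∪ (S ∪ H) = insert b (S ∪ H) := by
      ext x
      simp only [Finset.mem_union, Finset.mem_insert, Finset.mem_singleton]
      constructor
      · rintro ((hx | (hx | rfl)) | (hx | hx)) <;> tauto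
      · rintro (rfl | (hx | hx)) <;> tauto
    have hi : (S ∪ (H' ∪ {b})) ∩ (S ∪ H) = S ∪ H' := by
      ext x
      simp only [Finset.mem_inter, Finset.mem_union, Finset.mem_singleton]
      constructor
      · rintro ⟨hx | (hx | rfl), hy | hy⟩ <;> first | tauto | (exfalso; tauto)
      · rintro (hx | hx)
        · exact ⟨Or.inl hx, Or.inl hx⟩
        · exact ⟨Or.inr (Or.inl hx), Or.inr (hH'sub hx)⟩
    rw [hu, hi] at hsub'
    linarith
  have h1 := Finset.sum_le_sum key1
  have h2 := Finset.sum_le_sum key2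
  rw [Finset.sum_add_distrib, Finset.sum_const] at h1 h2
  have hn : 0 < H.powerset.card := Finset.card_pos.mpr ⟨∅, Finset.empty_mem_powerset H⟩
  have hn' : (0:ℝ) < (H.powerset.card : ℝ) := by exact_mod_cast hn
  rw [nsmul_eq_mul] at h1 h2
  have : (H.powerset.card : ℝ) * (f (insert b (S ∪ H)) - f (S ∪ H)) ≤
      (H.powerset.card : ℝ) * (f (insert a S) - f S) := by linarith
  exact le_of_mul_le_mul_left this hn'
end

section
/- Let f : 2^N → ℝ be monotone submodular, S ⊆ N disjoint from A where |A| = c ≥ 1, and suppose A maximizes f_S over all c-element subsets of N \ S. Then the mean marginal contribution F_S(A) = (1/(c(n−c−|S|))) Σ_{i∈A} Σ_{j∉S∪A} f_S((A\{i}) ∪ {j}) satisfies F_S(A) ≥ (1 − 1/c) · f_S(A). -/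
lemma sum_marginals_le {α : Type*} [DecidableEq α] (f : Finset α → ℝ)
    (hmono : ∀ S T : Finset α, S ⊆ T → f S ≤ f T)
    (hsub : ∀ A B : Finset α, f (A ∪ B) + f (A ∩ B) ≤ f A + f B)
    (S A : Finset α) :
    ∑ i ∈ A, (f (S ∪ A) - f (S ∪ A.erase i)) ≤ f (S ∪ A) - f S := by
  induction A using Finset.induction_on with
  | empty => simp
  | @insert a A' ha IH =>
    rw [Finset.sum_insert ha, Finset.erase_insert ha]
    have hterm : ∀ i ∈ A', f (S ∪ insert a A') - f (S ∪ (insert a A').erase i)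
        ≤ f (S ∪ A') - f (S ∪ A'.erase i) := by
      intro i hi
      have hne : i ≠ a := fun h => ha (h ▸ hi)
      rw [Finset.erase_insert_of_ne hne.symm]
      have h1 := hsub (S ∪ A') (S ∪ insert a (A'.erase i))
      have h2 : f (S ∪ insert a A') ≤ f ((S ∪ A') ∪ (S ∪ insert a (A'.erase i))) := by
        apply hmono; intro x hx; simp at hx ⊢; tauto
      have h3 : f (S ∪ A'.erase i) ≤ f ((S ∪ A') ∩ (S ∪ insert a (A'.erase i))) := by
        apply hmono; intro x hx; simp at hx ⊢; tauto
      linarith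
    have hs := Finset.sum_le_sum hterm
    have hmono' : f (S ∪ A') ≤ f (S ∪ insert a A') := by
      apply hmono; exact Finset.union_subset_union_right (Finset.subset_insert a A')
    linarith

theorem mean_marginal_lower_bound {α : Type*} [DecidableEq α] [Fintype α]
    (f : Finset α → ℝ)
    (hmono : ∀ S T : Finset α, S ⊆ T → f S ≤ f T)
    (hsub : ∀ A B : Finset α, f (A ∪ B) + f (A ∩ B) ≤ f A + f B)
    (S A : Finset α) (c : ℕ) (hc : 1 ≤ c)
    (hn : 1 ≤ Fintype.card α - c - S.card)
    (hA : A.card = c) (hdisj : Disjoint S A)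
    (hmax : ∀ B : Finset α, Disjoint S B → B.card = c →
      f (S ∪ B) - f S ≤ f (S ∪ A) - f S) :
    (1 / ((c * (Fintype.card α - c - S.card) : ℕ) : ℝ)) *
        ∑ i ∈ A, ∑ j ∈ Finset.univ \ (S ∪ A),
          (f (S ∪ insert j (A.erase i)) - f S)
      ≥ (1 - 1 / (c : ℝ)) * (f (S ∪ A) - f S) := by
  set m : ℕ := Fintype.card α - c - S.card with hm_def
  set X : ℝ := f (S ∪ A) - f S with hX_def
  have hm : (Finset.univ \ (S ∪ A)).card = m := by
    rw [Finset.card_sdiff_of_subset (Finset.subset_univ _), Finset.card_univ,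
      Finset.card_union_of_disjoint hdisj, hA, hm_def, Nat.sub_sub]
    ring_nf
  have hX : 0 ≤ X := sub_nonneg.2 (hmono S (S ∪ A) Finset.subset_union_left)
  have hsum1 := sum_marginals_le f hmono hsub S A
  have e : ∑ i ∈ A, (f (S ∪ A.erase i) - f S)
      + ∑ i ∈ A, (f (S ∪ A) - f (S ∪ A.erase i)) = (c : ℝ) * X := by
    rw [← Finset.sum_add_distrib]
    have : ∑ i ∈ A, ((f (S ∪ A.erase i) - f S) + (f (S ∪ A) - f (S ∪ A.erase i)))
        = ∑ i ∈ A, X := Finset.sum_congr rfl (by intros; ring)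
    rw [this, Finset.sum_const, hA, nsmul_eq_mul]
  have h4 : ((c : ℝ) - 1) * X ≤ ∑ i ∈ A, (f (S ∪ A.erase i) - f S) := by linarith
  have h5 : ∀ i ∈ A, (m : ℝ) * (f (S ∪ A.erase i) - f S)
      ≤ ∑ j ∈ Finset.univ \ (S ∪ A), (f (S ∪ insert j (A.erase i)) - f S) := by
    intro i _
    have := Finset.card_nsmul_le_sum (Finset.univ \ (S ∪ A))
      (fun j => f (S ∪ insert j (A.erase i)) - f S) (f (S ∪ A.erase i) - f S)
      (fun j _ => by
        apply sub_le_sub_right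
        exact hmono _ _ (Finset.union_subset_union_right (Finset.subset_insert j _)))
    rw [hm] at this
    simpa [nsmul_eq_mul] using this
  have h6 : (m : ℝ) * (((c : ℝ) - 1) * X)
      ≤ ∑ i ∈ A, ∑ j ∈ Finset.univ \ (S ∪ A), (f (S ∪ insert j (A.erase i)) - f S) := by
    calc (m : ℝ) * (((c : ℝ) - 1) * X)
        ≤ (m : ℝ) * ∑ i ∈ A, (f (S ∪ A.erase i) - f S) :=
          mul_le_mul_of_nonneg_left h4 (by positivity)
      _ = ∑ i ∈ A, (m : ℝ) * (f (S ∪ A.erase i) - f S) := Finset.mul_sum _ _ _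
      _ ≤ _ := Finset.sum_le_sum h5
  have hc0 : (0 : ℝ) < (c : ℝ) := by exact_mod_cast hc
  have hm0 : (0 : ℝ) < (m : ℝ) := by exact_mod_cast hn
  rw [ge_iff_le]
  have hcm : ((c * m : ℕ) : ℝ) = (c : ℝ) * (m : ℝ) := by push_cast; ring
  rw [hcm]
  have key : (1 - 1 / (c : ℝ)) * X = (1 / ((c : ℝ) * m)) * ((m : ℝ) * (((c : ℝ) - 1) * X)) := by
    field_simp
  rw [key]
  exact mul_le_mul_of_nonneg_left h6 (by positivity)
end

section
/- Let f : 2^N → ℝ₊ be monotone submodular with f(∅) = 0. Let H ⊆ N with |H| = ℓ, let k ≥ 3ℓ/ε for some ε ∈ (0, 1], and set k' = k − ℓ. Let O ∈ argmax_{|T| ≤ k} f(T), and let O_H ∈ argmax_{|T| ≤ k'} f_H(T). If f_H(O_H) < f(O)/e, then f(H) ≥ (1 − 1/e − ε/3)·f(O). -/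
lemma sum_marg_aux {α : Type*} [DecidableEq α] (f : Finset α → ℝ) (hzero : f ∅ = 0)
    (hsub : ∀ A B : Finset α, f (A ∪ B) + f (A ∩ B) ≤ f A + f B) :
    ∀ S : Finset α, (∑ e ∈ S, (f S - f (S.erase e))) ≤ f S := by
  intro S
  induction S using Finset.induction_on with
  | empty => simp [hzero]
  | @insert a s ha ih =>
    rw [Finset.sum_insert ha, Finset.erase_insert ha]
    have key : ∀ e ∈ s, f (insert a s) - f ((insert a s).erase e) ≤ f s - f (s.erase e) := by
      intro e he
      have hae : a ≠ e := fun h => ha (h ▸ he)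
      have h1 : s ∪ (insert a s).erase e = insert a s := by
        ext x; simp [Finset.mem_erase]; constructor
        · rintro (h | h) <;> tauto
        · rintro (rfl | h)
          · right; exact ⟨hae, Or.inl rfl⟩
          · by_cases hx : x = e
            · left; exact hx ▸ he
            · right; exact ⟨hx, Or.inr h⟩
      have h2 : s ∩ (insert a s).erase e = s.erase e := by
        ext x; simp [Finset.mem_erase]; tauto
      have := hsub s ((insert a s).erase e)
      rw [h1, h2] at this
      linarith
    have := Finset.sum_le_sum key
    linarith

lemma exists_small_loss {α : Type*} [DecidableEq α] (f : Finset α → ℝ) (hzero : f ∅ = 0)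
    (hsub : ∀ A B : Finset α, f (A ∪ B) + f (A ∩ B) ≤ f A + f B)
    (S : Finset α) (hne : S.Nonempty) :
    ∃ e ∈ S, (S.card : ℝ) * (f S - f (S.erase e)) ≤ f S := by
  have hcard : (0 : ℝ) < S.card := by exact_mod_cast Finset.card_pos.mpr hne
  have hsum : (∑ e ∈ S, (f S - f (S.erase e))) ≤ ∑ _e ∈ S, f S / S.card := by
    rw [Finset.sum_const, nsmul_eq_mul, mul_div_cancel₀ _ (ne_of_gt hcard)]
    exact sum_marg_aux f hzero hsub S
  obtain ⟨e, he, hle⟩ := Finset.exists_le_of_sum_le hne hsum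
  refine ⟨e, he, ?_⟩
  have := mul_le_mul_of_nonneg_left hle (le_of_lt hcard)
  rwa [mul_div_cancel₀ _ (ne_of_gt hcard)] at this

lemma exists_good_subset {α : Type*} [DecidableEq α] (f : Finset α → ℝ)
    (hnonneg : ∀ S : Finset α, 0 ≤ f S) (hzero : f ∅ = 0)
    (hsub : ∀ A B : Finset α, f (A ∪ B) + f (A ∩ B) ≤ f A + f B)
    (S : Finset α) :
    ∀ m : ℕ, m ≤ S.card → ∃ T ⊆ S, T.card = S.card - m ∧
      ((S.card : ℝ) - m) * f S ≤ (S.card : ℝ) * f T := by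
  intro m
  induction m with
  | zero => intro _; exact ⟨S, Finset.Subset.refl S, by simp, by simp⟩
  | succ m ih =>
    intro hm
    obtain ⟨T, hTS, hTcard, hTineq⟩ := ih (Nat.le_of_succ_le hm)
    have hTpos : 0 < T.card := by omega
    obtain ⟨e, he, hloss⟩ := exists_small_loss f hzero hsub T (Finset.card_pos.mp hTpos)
    refine ⟨T.erase e, (Finset.erase_subset e T).trans hTS, ?_, ?_⟩
    · rw [Finset.card_erase_of_mem he]; omega
    · have ht : (T.card : ℝ) = (S.card : ℝ) - m := by
        rw [hTcard]; push_cast [Nat.cast_sub (Nat.le_of_succ_le hm)]; ring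
      have ht1 : (1 : ℝ) ≤ (T.card : ℝ) := by exact_mod_cast hTpos
      have hsT : (T.card : ℝ) ≤ (S.card : ℝ) := by
        exact_mod_cast Finset.card_le_card hTS
      set t := (T.card : ℝ)
      set s := (S.card : ℝ)
      have hfT := hnonneg T
      have hfS := hnonneg S
      have hfT' := hnonneg (T.erase e)
      -- t * f(T') ≥ (t-1) * f T ; s * f T ≥ t * f S ⇒ s * t * fT' ≥ (t-1) s fT ≥ (t-1) t fS
      have h1 : t * f (T.erase e) ≥ (t - 1) * f T := by nlinarith
      have h2 : s * (t * f (T.erase e)) ≥ s * ((t - 1) * f T) :=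
        mul_le_mul_of_nonneg_left h1 (by linarith)
      have h3 : (t - 1) * (s * f T) ≥ (t - 1) * (t * f S) :=
        mul_le_mul_of_nonneg_left (ht ▸ hTineq) (by linarith)
      have goal : (s - (m + 1)) * f S ≤ s * f (T.erase e) := by nlinarith
      push_cast
      linarith [goal]

theorem smoothing_set_good_when_opt_h_small {α : Type*} [DecidableEq α]
    (f : Finset α → ℝ)
    (hnonneg : ∀ S : Finset α, 0 ≤ f S)
    (hzero : f ∅ = 0)
    (hmono : ∀ S T : Finset α, S ⊆ T → f S ≤ f T)
    (hsub : ∀ A B : Finset α, f (A ∪ B) + f (A ∩ B) ≤ f A + f B)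
    (H O OH : Finset α) (ℓ k : ℕ) (hH : H.card = ℓ)
    (ε : ℝ) (hε0 : 0 < ε) (hε1 : ε ≤ 1)
    (hk : (3 * ℓ : ℝ) / ε ≤ (k : ℝ))
    (hO : O.card ≤ k) (hOmax : ∀ T : Finset α, T.card ≤ k → f T ≤ f O)
    (hOH : OH.card ≤ k - ℓ)
    (hOHmax : ∀ T : Finset α, T.card ≤ k - ℓ →
      f (H ∪ T) - f H ≤ f (H ∪ OH) - f H)
    (hsmall : f (H ∪ OH) - f H < f O / Real.exp 1) :
    f H ≥ (1 - 1 / Real.exp 1 - ε / 3) * f O := by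
  have hεk : 3 * (ℓ : ℝ) ≤ ε * k := by
    rw [div_le_iff₀ hε0] at hk; linarith
  have hℓk : ℓ ≤ k := by
    have : (ℓ : ℝ) ≤ (k : ℝ) := by nlinarith [Nat.cast_nonneg (α := ℝ) k]
    exact_mod_cast this
  have key : (1 - ε / 3) * f O ≤ f H + f O / Real.exp 1 := by
    -- find O' ⊆ O with |O'| ≤ k - ℓ and (1 - ε/3) f O ≤ f O'
    have hstep : ∀ T : Finset α, T.card ≤ k - ℓ → f T ≤ f H + f O / Real.exp 1 := by
      intro T hT
      have h1 : f T ≤ f (H ∪ T) := hmono T (H ∪ T) Finset.subset_union_right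
      have h2 := hOHmax T hT
      linarith
    by_cases hc : O.card ≤ k - ℓ
    · have := hstep O hc
      nlinarith [hnonneg O]
    · push_neg at hc
      have hcm : k - ℓ ≤ O.card := le_of_lt hc
      set m := O.card - (k - ℓ) with hm
      have hmle : m ≤ O.card := by omega
      obtain ⟨T, hTO, hTcard, hTineq⟩ := exists_good_subset f hnonneg hzero hsub O m hmle
      have hTc : T.card = k - ℓ := by omega
      have hfT := hstep T (le_of_eq hTc)
      -- (O.card - m) = k - ℓ ; so (k-ℓ) f O ≤ O.card * f T ≤ k * f T
      have hcast : ((O.card : ℝ) - m) = ((k : ℝ) - ℓ) := by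
        have h := (by omega : O.card - m = k - ℓ)
        rw [← Nat.cast_sub hmle, h, Nat.cast_sub hℓk]
      rw [hcast] at hTineq
      have hk0 : 0 < k := by omega
      have hkR : (0 : ℝ) < k := by exact_mod_cast hk0
      have hOk : (O.card : ℝ) ≤ (k : ℝ) := by exact_mod_cast hO
      have h4 : ((k : ℝ) - ℓ) * f O ≤ (k : ℝ) * f T :=
        hTineq.trans (mul_le_mul_of_nonneg_right hOk (hnonneg T))
      -- (1 - ε/3) * k ≤ k - ℓ
      have h5 : (1 - ε / 3) * (k : ℝ) ≤ (k : ℝ) - ℓ := by nlinarith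
      have h6 : (1 - ε / 3) * f O ≤ f T := by
        have := mul_le_mul_of_nonneg_right h5 (hnonneg O)
        have h7 : (1 - ε / 3) * (k : ℝ) * f O ≤ (k : ℝ) * f T := by nlinarith
        nlinarith
      linarith
  have hrw : (1 - 1 / Real.exp 1 - ε / 3) * f O
      = (1 - ε / 3) * f O - f O / Real.exp 1 := by
    field_simp
    ring
  linarith
end
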